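/- arXiv:1906.00373 — 2 statements merged into one kernel-verified Lean document; each statement's English description precedes it below -/
import Mathlib

section
/- For α ∈ (0,2), m ∈ [0,1), and k ∈ ℤ_{≥0}, ν_{k,α}({x ∈ ℝ^{k+1}∖{0} : ‖x‖ > 1}) = (1 − m^α) ∑_{j=0}^k ‖v_j^{(k)}‖^α = ((1−m^α)/(1−m^2)^{α/2}) ( (1−m^{2(k+1)})^{α/2}/(1−m^α) + ∑_{j=1}^k (1−m^{2(k−j+1)})^{α/2} ). -/
open MeasureTheory Set Finset

-- helpers

lemma aux_integral (α : ℝ) (hα0 : 0 < α) :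
    ∫ u in Ioi (1:ℝ), α * u ^ (-α - 1) = 1 := by
  rw [MeasureTheory.integral_const_mul, integral_Ioi_rpow_of_lt (by linarith) one_pos]
  rw [show -α - 1 + 1 = -α by ring, Real.one_rpow]
  field_simp

lemma aux_geom (m : ℝ) (hm : m ^ 2 ≠ 1) (n : ℕ) :
    ∑ t ∈ Finset.range n, (m ^ 2) ^ t = (1 - m ^ (2 * n)) / (1 - m ^ 2) := by
  rw [geom_sum_eq hm, ← pow_mul]
  have h1 : m ^ 2 - 1 ≠ 0 := sub_ne_zero.mpr hm
  have h2 : (1:ℝ) - m ^ 2 ≠ 0 := fun h => h1 (by linarith [sub_eq_zero.mp h])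
  field_simp
  ring

lemma aux_norm_rpow {n : ℕ} (x : EuclideanSpace ℝ (Fin n)) (α : ℝ) :
    ‖x‖ ^ α = (∑ i, ‖x i‖ ^ 2) ^ (α / 2) := by
  have hS : (0:ℝ) ≤ ∑ i, ‖x i‖ ^ 2 := Finset.sum_nonneg fun i _ => sq_nonneg _
  rw [EuclideanSpace.norm_eq, Real.sqrt_eq_rpow, ← Real.rpow_mul hS,
    show 1/2*α = α/2 by ring]

/-- For `α ∈ (0,2)`, `m ∈ [0,1)`, `k ∈ ℤ₊`:
`ν_{k,α}({x : ‖x‖ > 1}) = (1−m^α) ∑_{j=0}^k ‖v_j‖^α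
  = ((1−m^α)/(1−m²)^{α/2}) ((1−m^{2(k+1)})^{α/2}/(1−m^α) + ∑_{j=1}^k (1−m^{2(k−j+1)})^{α/2})`. -/
theorem stmt9 (k : ℕ) (m α : ℝ) (hm0 : 0 ≤ m) (hm1 : m < 1) (hα0 : 0 < α) (hα2 : α < 2)
    (v : Fin (k + 1) → EuclideanSpace ℝ (Fin (k + 1)))
    (hv0 : ∀ i : Fin (k + 1), v 0 i = (1 - m ^ α) ^ (-(1 / α)) * m ^ (i : ℕ))
    (hvj : ∀ j : Fin (k + 1), 1 ≤ (j : ℕ) → ∀ i : Fin (k + 1),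
      v j i = if (j : ℕ) ≤ (i : ℕ) then m ^ ((i : ℕ) - (j : ℕ)) else 0)
    (ν : Measure (EuclideanSpace ℝ (Fin (k + 1))))
    (hν : ∀ B : Set (EuclideanSpace ℝ (Fin (k + 1))), MeasurableSet B →
      ν B = ENNReal.ofReal ((1 - m ^ α) * ∑ j, ‖v j‖ ^ α *
        ∫ u in Ioi (0 : ℝ), B.indicator (fun _ => (1 : ℝ)) ((u / ‖v j‖) • v j)
          * (α * u ^ (-α - 1)))) :
    ν {x | 1 < ‖x‖} = ENNReal.ofReal ((1 - m ^ α) * ∑ j, ‖v j‖ ^ α) ∧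
      ν {x | 1 < ‖x‖} = ENNReal.ofReal ((1 - m ^ α) / (1 - m ^ 2) ^ (α / 2) *
        ((1 - m ^ (2 * (k + 1))) ^ (α / 2) / (1 - m ^ α)
          + ∑ j ∈ Icc 1 k, (1 - m ^ (2 * (k - j + 1))) ^ (α / 2))) := by
  -- basic inequalities
  have hm2 : m ^ 2 < 1 := by nlinarith
  have hmα : m ^ α < 1 := by
    rcases eq_or_lt_of_le hm0 with h | h
    · rw [← h, Real.zero_rpow hα0.ne']; norm_num
    · exact Real.rpow_lt_one hm0 hm1 hα0
  have h1mα : (0:ℝ) < 1 - m ^ α := by linarith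
  have h1m2 : (0:ℝ) < 1 - m ^ 2 := by linarith
  have hcpos : (0:ℝ) < (1 - m ^ α) ^ (-(1 / α)) := Real.rpow_pos_of_pos h1mα _
  have hpow_le : ∀ n : ℕ, (0:ℝ) ≤ 1 - m ^ (2 * n) := by
    intro n
    have := pow_le_one₀ hm0 hm1.le (n := 2 * n)
    linarith
  -- positivity of the norms
  have hvpos : ∀ j : Fin (k + 1), 0 < ‖v j‖ := by
    intro j
    rw [norm_pos_iff]
    intro hzero
    rcases Nat.eq_zero_or_pos (j : ℕ) with hj | hj
    · have hj0 : j = 0 := Fin.ext hj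
      have h1 : v 0 0 = 0 := by rw [← hj0, hzero]; rfl
      rw [hv0 0] at h1
      simp only [Fin.val_zero, pow_zero, mul_one] at h1
      exact hcpos.ne' h1
    · have h1 : v j j = 0 := by rw [hzero]; rfl
      rw [hvj j hj j, if_pos le_rfl, Nat.sub_self, pow_zero] at h1
      exact one_ne_zero h1
  -- the inner integral equals 1 for every j
  have hint : ∀ j : Fin (k + 1),
      (∫ u in Ioi (0:ℝ), ({x : EuclideanSpace ℝ (Fin (k + 1)) | 1 < ‖x‖}).indicator
        (fun _ => (1:ℝ)) ((u / ‖v j‖) • v j) * (α * u ^ (-α - 1))) = 1 := by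
    intro j
    have hvj' := hvpos j
    have hcong : ∀ u ∈ Ioi (0:ℝ),
        ({x : EuclideanSpace ℝ (Fin (k + 1)) | 1 < ‖x‖}).indicator
          (fun _ => (1:ℝ)) ((u / ‖v j‖) • v j) * (α * u ^ (-α - 1))
          = (Ioi (1:ℝ)).indicator (fun u => α * u ^ (-α - 1)) u := by
      intro u hu
      have hnorm : ‖(u / ‖v j‖) • v j‖ = u := by
        rw [norm_smul, Real.norm_eq_abs, abs_of_pos (div_pos hu hvj'),
          div_mul_cancel₀ _ hvj'.ne']
      have hmem : ((u / ‖v j‖) • v j ∈ {x : EuclideanSpace ℝ (Fin (k + 1)) | 1 < ‖x‖})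
          ↔ 1 < u := by rw [Set.mem_setOf_eq, hnorm]
      by_cases h1 : 1 < u
      · rw [Set.indicator_of_mem (hmem.mpr h1)]
        simp [Set.indicator, h1]
      · rw [Set.indicator_of_notMem (fun h => h1 (hmem.mp h))]
        simp [Set.indicator, h1]
    rw [setIntegral_congr_fun measurableSet_Ioi hcong,
      setIntegral_indicator measurableSet_Ioi, Set.Ioi_inter_Ioi,
      show max (0:ℝ) 1 = 1 by norm_num]
    exact aux_integral α hα0
  have hset : MeasurableSet {x : EuclideanSpace ℝ (Fin (k + 1)) | 1 < ‖x‖} :=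
    (isOpen_lt continuous_const continuous_norm).measurableSet
  have hfirst : ν {x | 1 < ‖x‖} = ENNReal.ofReal ((1 - m ^ α) * ∑ j, ‖v j‖ ^ α) := by
    rw [hν _ hset]
    congr 2
    exact Finset.sum_congr rfl fun j _ => by rw [hint j, mul_one]
  -- sums of squares
  have hrange : ∀ jn : ℕ, jn ≤ k →
      ∑ i ∈ Finset.range (k + 1), (if jn ≤ i then (m ^ 2) ^ (i - jn) else 0)
        = (1 - m ^ (2 * (k - jn + 1))) / (1 - m ^ 2) := by
    intro jn hjk
    rw [Finset.range_eq_Ico, ← Finset.sum_Ico_consecutive _ (Nat.zero_le jn)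
      (by omega : jn ≤ k + 1)]
    have h1 : ∑ i ∈ Finset.Ico 0 jn, (if jn ≤ i then (m ^ 2) ^ (i - jn) else 0) = 0 := by
      apply Finset.sum_eq_zero
      intro i hi
      rw [if_neg]
      simp only [Finset.mem_Ico] at hi
      omega
    have h2 : ∑ i ∈ Finset.Ico jn (k + 1), (if jn ≤ i then (m ^ 2) ^ (i - jn) else 0)
        = ∑ t ∈ Finset.range (k + 1 - jn), (m ^ 2) ^ t := by
      rw [Finset.sum_Ico_eq_sum_range]
      refine Finset.sum_congr rfl fun t _ => ?_
      rw [if_pos (Nat.le_add_right _ _)]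
      congr 1
      omega
    rw [h1, h2, zero_add, aux_geom m hm2.ne, show k + 1 - jn = k - jn + 1 by omega]
  -- norms to the α
  have hnorm0 : ‖v 0‖ ^ α
      = (1 - m ^ α)⁻¹ * ((1 - m ^ (2 * (k + 1))) / (1 - m ^ 2)) ^ (α / 2) := by
    have hS : ∑ i, ‖v (0 : Fin (k+1)) i‖ ^ 2
        = ((1 - m ^ α) ^ (-(1 / α))) ^ 2 * ((1 - m ^ (2 * (k + 1))) / (1 - m ^ 2)) := by
      have : ∀ i : Fin (k + 1), ‖v 0 i‖ ^ 2
          = ((1 - m ^ α) ^ (-(1 / α))) ^ 2 * (m ^ 2) ^ (i : ℕ) := by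
        intro i
        rw [Real.norm_eq_abs, sq_abs, hv0 i]
        rw [mul_pow, ← pow_mul, mul_comm (i : ℕ) 2, pow_mul]
      rw [Finset.sum_congr rfl fun i _ => this i, ← Finset.mul_sum]
      congr 1
      have := hrange 0 (Nat.zero_le k)
      simp only [Nat.zero_le, if_true, Nat.sub_zero] at this
      rw [Fin.sum_univ_eq_sum_range (fun i => (m ^ 2) ^ i) (k + 1), this]
    rw [aux_norm_rpow, hS, Real.mul_rpow (sq_nonneg _)
      (div_nonneg (hpow_le _) h1m2.le)]
    congr 1
    rw [← Real.rpow_natCast ((1 - m ^ α) ^ (-(1/α))) 2, ← Real.rpow_mul h1mα.le,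
      ← Real.rpow_mul h1mα.le, show -(1/α) * (2:ℕ) * (α/2) = -1 * (α⁻¹ * α) by push_cast; ring,
      inv_mul_cancel₀ hα0.ne', mul_one, Real.rpow_neg_one]
  have hnormj : ∀ j : Fin (k + 1), 1 ≤ (j : ℕ) → ‖v j‖ ^ α
      = ((1 - m ^ (2 * (k - (j : ℕ) + 1))) / (1 - m ^ 2)) ^ (α / 2) := by
    intro j hj
    have hS : ∑ i, ‖v j i‖ ^ 2
        = (1 - m ^ (2 * (k - (j : ℕ) + 1))) / (1 - m ^ 2) := by
      have : ∀ i : Fin (k + 1), ‖v j i‖ ^ 2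
          = (if (j : ℕ) ≤ (i : ℕ) then (m ^ 2) ^ ((i : ℕ) - (j : ℕ)) else 0) := by
        intro i
        rw [Real.norm_eq_abs, sq_abs, hvj j hj i]
        by_cases h : (j : ℕ) ≤ (i : ℕ)
        · rw [if_pos h, if_pos h, ← pow_mul, mul_comm ((i:ℕ) - (j:ℕ)) 2, pow_mul]
        · rw [if_neg h, if_neg h]; ring
      rw [Finset.sum_congr rfl fun i _ => this i,
        Fin.sum_univ_eq_sum_range (fun i => if (j : ℕ) ≤ i then (m ^ 2) ^ (i - (j:ℕ)) else 0)
          (k + 1), hrange (j : ℕ) (by omega)]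
    rw [aux_norm_rpow, hS]
  -- turn the Fin-indexed sum into the Icc sum
  have hsum : ∑ j, ‖v j‖ ^ α
      = (1 - m ^ α)⁻¹ * ((1 - m ^ (2 * (k + 1))) / (1 - m ^ 2)) ^ (α / 2)
        + ∑ j ∈ Icc 1 k, ((1 - m ^ (2 * (k - j + 1))) / (1 - m ^ 2)) ^ (α / 2) := by
    rw [Fin.sum_univ_succ, hnorm0]
    congr 1
    have h1 : ∀ j : Fin k, ‖v j.succ‖ ^ α
        = ((1 - m ^ (2 * (k - ((j : ℕ) + 1) + 1))) / (1 - m ^ 2)) ^ (α / 2) := by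
      intro j
      rw [hnormj j.succ (by simp [Fin.val_succ])]
      norm_num [Fin.val_succ]
    rw [Finset.sum_congr rfl fun j _ => h1 j,
      Fin.sum_univ_eq_sum_range
        (fun j => ((1 - m ^ (2 * (k - (j + 1) + 1))) / (1 - m ^ 2)) ^ (α / 2)) k,
      ← Finset.Ico_add_one_right_eq_Icc, Finset.sum_Ico_eq_sum_range]
    norm_num
    exact Finset.sum_congr rfl fun t _ => by rw [Nat.add_comm 1 t]
  refine ⟨hfirst, ?_⟩
  rw [hfirst]
  congr 1
  rw [hsum]
  have hB : (0:ℝ) < (1 - m ^ 2) ^ (α / 2) := Real.rpow_pos_of_pos h1m2 _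
  have hdiv : ∀ n : ℕ, ((1 - m ^ (2 * n)) / (1 - m ^ 2)) ^ (α / 2)
      = (1 - m ^ (2 * n)) ^ (α / 2) / (1 - m ^ 2) ^ (α / 2) := fun n =>
    Real.div_rpow (hpow_le n) h1m2.le (α / 2)
  rw [hdiv, Finset.sum_congr rfl fun j _ => hdiv (k - j + 1), ← Finset.sum_div]
  field_simp
end

section
/- Let μ be a nonzero locally finite measure on ℝ^d∖{0} with the scaling property μ(cB) = c^{−α}μ(B) for all c > 0 (α > 0), and let f : ℝ^d → ℝ be positively homogeneous of degree β > 0 with μ(D_f) = 0 and continuous at 0. Then μ(f^{-1}({1})) = 0. -/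
/-!
Since `f (c • x) = c ^ β * f x`, the dilation by `c > 0` maps the level set `{f = 1}` into
`{f = c ^ β}`, so by the scaling property of `μ` every level set `{f = t}`, `t > 0`, has positive
measure as soon as `{f = 1}` has. (The level sets are null-measurable because `f` is continuous
`μ`-a.e.) Continuity at `0` and `f 0 = 0` put the uncountably many disjoint level sets
`{f = t}`, `t ≥ 1`, inside some `{ε < ‖x‖}`, which has finite measure; but a finite measure
charges only countably many disjoint sets.
-/

open MeasureTheory Set Pointwise

theorem aemeasurable_of_measure_setOf_not_continuousAt {X Y : Type*} [TopologicalSpace X]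
    [MeasurableSpace X] [OpensMeasurableSpace X] [PseudoMetricSpace Y] [MeasurableSpace Y]
    [BorelSpace Y] {μ : Measure X} {f : X → Y} (hf : μ {x | ¬ ContinuousAt f x} = 0) :
    AEMeasurable f μ := by
  have hC : ∀ᵐ x ∂μ, ContinuousAt f x := ae_iff.mpr hf
  rw [← Measure.restrict_eq_self_of_ae_mem (s := {x | ContinuousAt f x}) hC]
  exact ContinuousOn.aemeasurable (fun x hx => hx.continuousWithinAt)
    (measurableSet_of_continuousAt f)

theorem countable_setOf_measure_preimage_singleton_ne_zero {X Y : Type*} [MeasurableSpace X]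
    [MeasurableSpace Y] [MeasurableSingletonClass Y] {μ : Measure X} {g : X → Y}
    (hg : NullMeasurable g μ) {s : Set X} (hs : μ s ≠ ⊤) :
    {t | g ⁻¹' {t} ⊆ s ∧ μ (g ⁻¹' {t}) ≠ 0}.Countable := by
  have : IsFiniteMeasure (μ.restrict s) := isFiniteMeasure_restrict.mpr hs
  refine (Measure.countable_meas_level_set_pos₀ (μ := μ.restrict s)
    (fun u hu => (hg hu).mono_ac Measure.restrict_le_self.absolutelyContinuous)).mono ?_
  rintro t ⟨hsub, hne⟩
  change 0 < μ.restrict s (g ⁻¹' {t})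
  exact (Measure.restrict_eq_self μ hsub).symm ▸ pos_iff_ne_zero.mpr hne

theorem measure_smul_ne_zero_of_scaling {E : Type*} [SMul ℝ E] [MeasurableSpace E]
    {μ : Measure E} {α : ℝ}
    (hscale : ∀ c : ℝ, 0 < c → ∀ B : Set E, MeasurableSet B →
      μ (c • B) = ENNReal.ofReal (c ^ (-α)) * μ B)
    {s : Set E} (hs : NullMeasurableSet s μ) (hs0 : μ s ≠ 0) {c : ℝ} (hc : 0 < c) :
    μ (c • s) ≠ 0 := by
  obtain ⟨t, hts, ht, hts_ae⟩ := hs.exists_measurable_subset_ae_eq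
  intro h0
  have := measure_mono_null (smul_set_mono hts) h0
  rw [hscale c hc t ht, measure_congr hts_ae, mul_eq_zero, ENNReal.ofReal_eq_zero] at this
  exact this.elim (fun h => (Real.rpow_pos_of_pos hc _).not_ge h) hs0

section Homogeneous

variable {E : Type*} [AddCommGroup E] [Module ℝ E] {f : E → ℝ} {β : ℝ}

theorem map_zero_of_homogeneous (hβ : β ≠ 0)
    (hhom : ∀ c : ℝ, 0 < c → ∀ v, f (c • v) = c ^ β * f v) : f 0 = 0 := by
  have h := hhom 2 two_pos 0
  rw [smul_zero] at h
  have h2 : (2 : ℝ) ^ β ≠ 1 := by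
    rw [← Real.rpow_zero 2, Ne, Real.rpow_right_inj two_pos (by norm_num)]
    exact hβ
  have : ((2 : ℝ) ^ β - 1) * f 0 = 0 := by linarith
  exact (mul_eq_zero.mp this).resolve_left (sub_ne_zero.mpr h2)

theorem smul_preimage_singleton_subset_of_homogeneous
    (hhom : ∀ c : ℝ, 0 < c → ∀ v, f (c • v) = c ^ β * f v) {c : ℝ} (hc : 0 < c) (q : ℝ) :
    c • f ⁻¹' {q} ⊆ f ⁻¹' {c ^ β * q} :=
  smul_set_subset_iff.mpr fun x (hx : f x = q) => by simp [hhom c hc x, hx]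

theorem measure_preimage_singleton_ne_zero_of_homogeneous [MeasurableSpace E]
    {μ : Measure E} {α : ℝ}
    (hscale : ∀ c : ℝ, 0 < c → ∀ B : Set E, MeasurableSet B →
      μ (c • B) = ENNReal.ofReal (c ^ (-α)) * μ B)
    (hhom : ∀ c : ℝ, 0 < c → ∀ v, f (c • v) = c ^ β * f v) (hβ : β ≠ 0)
    (h1 : NullMeasurableSet (f ⁻¹' {1}) μ) (h10 : μ (f ⁻¹' {1}) ≠ 0) {t : ℝ} (ht : 0 < t) :
    μ (f ⁻¹' {t}) ≠ 0 := by
  have hc : 0 < t ^ β⁻¹ := Real.rpow_pos_of_pos ht _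
  have hct : (t ^ β⁻¹) ^ β * 1 = t := by
    rw [mul_one, ← Real.rpow_mul ht.le, inv_mul_cancel₀ hβ, Real.rpow_one]
  have hsub := smul_preimage_singleton_subset_of_homogeneous hhom hc 1
  rw [hct] at hsub
  exact fun h0 => measure_smul_ne_zero_of_scaling hscale h1 h10 hc (measure_mono_null hsub h0)

end Homogeneous

theorem stmt15_general (d : ℕ) (α : ℝ)
    (μ : Measure (EuclideanSpace ℝ (Fin d)))
    (hloc : ∀ ε : ℝ, 0 < ε → μ {x | ε < ‖x‖} < ⊤)
    (hscale : ∀ c : ℝ, 0 < c → ∀ B : Set (EuclideanSpace ℝ (Fin d)),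
      MeasurableSet B → μ (c • B) = ENNReal.ofReal (c ^ (-α)) * μ B)
    (f : EuclideanSpace ℝ (Fin d) → ℝ) (β : ℝ) (hβ : 0 < β)
    (hhom : ∀ c : ℝ, 0 < c → ∀ v, f (c • v) = c ^ β * f v)
    (hcont : ContinuousAt f 0)
    (hDf : μ {x | ¬ ContinuousAt f x} = 0) :
    μ (f ⁻¹' {1}) = 0 := by
  by_contra hne
  have hfm : NullMeasurable f μ :=
    (aemeasurable_of_measure_setOf_not_continuousAt hDf).nullMeasurable
  obtain ⟨ε, hε, hsmall⟩ : ∃ ε > 0, ∀ x, ‖x‖ < ε → f x < 1 := by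
    have := hcont.eventually (gt_mem_nhds (map_zero_of_homogeneous hβ.ne' hhom ▸ one_pos))
    simpa using Metric.eventually_nhds_iff.mp this
  have hIci : ¬ (Ici (1 : ℝ)).Countable := fun h => by
    simpa [Real.volume_Ici] using h.measure_zero volume
  refine hIci ((countable_setOf_measure_preimage_singleton_ne_zero hfm
    (hloc (ε / 2) (half_pos hε)).ne).mono fun t (ht : 1 ≤ t) => ?_)
  refine ⟨?_, ?_⟩
  · intro x (hx : f x = t)
    show ε / 2 < ‖x‖
    by_contra! hxε
    linarith [hsmall x (by linarith)]
  · exact measure_preimage_singleton_ne_zero_of_homogeneous hscale hhom hβ.ne'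
      (hfm (measurableSet_singleton 1)) hne (by linarith)

/-- If `μ` is a nonzero locally finite measure on `ℝ^d∖{0}` with scaling property
`μ(cB) = c^{−α} μ(B)` (`α > 0`), and `f` is positively homogeneous of degree `β > 0`,
continuous at `0`, with `μ(D_f) = 0`, then `μ(f⁻¹({1})) = 0`. -/
theorem stmt15 (d : ℕ) (α : ℝ) (hα : 0 < α)
    (μ : Measure (EuclideanSpace ℝ (Fin d))) (hμ0 : μ {0} = 0) (hμne : μ ≠ 0)
    (hloc : ∀ ε : ℝ, 0 < ε → μ {x | ε < ‖x‖} < ⊤)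
    (hscale : ∀ c : ℝ, 0 < c → ∀ B : Set (EuclideanSpace ℝ (Fin d)),
      MeasurableSet B → μ (c • B) = ENNReal.ofReal (c ^ (-α)) * μ B)
    (f : EuclideanSpace ℝ (Fin d) → ℝ) (β : ℝ) (hβ : 0 < β)
    (hhom : ∀ c : ℝ, 0 < c → ∀ v, f (c • v) = c ^ β * f v)
    (hcont : ContinuousAt f 0)
    (hDf : μ {x | ¬ ContinuousAt f x} = 0) :
    μ (f ⁻¹' {1}) = 0 :=
  stmt15_general d α μ hloc hscale f β hβ hhom hcont hDf
end
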